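/- arXiv:1005.4878 — 6 statements merged into one kernel-verified Lean document; each statement's English description precedes it below -/
import Mathlib

section
/- Let k be a commutative ring and A a k-algebra such that the sandwich map A ⊗_k A^op → End_k(A) is an isomorphism and A is finitely generated projective and faithful as a k-module. Then A is separable over k, i.e., A is projective as an A^e-module. -/
open TensorProduct MulOpposite

/-- The sandwich map `A ⊗[k] Aᵐᵒᵖ →ₗ[k] End_k(A)`, sending `a ⊗ b` to `x ↦ a * x * b`. -/
noncomputable def sandwich (k A : Type*) [CommRing k] [Ring A] [Algebra k A] :
    (A ⊗[k] Aᵐᵒᵖ) →ₗ[k] Module.End k A :=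
  TensorProduct.lift <|
    LinearMap.mk₂ k (fun a b => (LinearMap.mulLeft k a) ∘ₗ (LinearMap.mulRight k b.unop))
      (fun a a' b => by ext x; simp [add_mul])
      (fun c a b => by ext x; simp [smul_mul_assoc])
      (fun a b b' => by ext x; simp [mul_add])
      (fun c a b => by ext x; simp [mul_smul_comm])

/-- `A` as a module over its enveloping algebra `A ⊗[k] Aᵐᵒᵖ`, via `(a ⊗ b) • x = a * x * b`. -/
noncomputable instance envModule (k A : Type*) [CommRing k] [Ring A] [Algebra k A] :
    Module (A ⊗[k] Aᵐᵒᵖ) A :=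
  TensorProduct.Algebra.module

/-! Nakayama's lemma applied to `A = T • A`, together with faithfulness, forces the trace ideal
`T` of the finitely generated projective `k`-module `A` to be all of `k`; so `∑ φᵢ(xᵢ) = 1` for
finitely many `φᵢ ∈ A*`, `xᵢ ∈ A`. Through the sandwich isomorphism the endomorphisms
`y ↦ φᵢ(y) a` come from elements of `A^e` depending `A^e`-linearly on `a`, and together with
`(eᵢ) ↦ ∑ eᵢ • xᵢ` this exhibits `A` as a direct summand of `(A^e)ⁿ`. -/

namespace Module

variable (R M : Type*) [CommRing R] [AddCommGroup M] [Module R M]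

def traceIdeal : Ideal R :=
  Ideal.span (Set.range fun p : Dual R M × M => p.1 p.2)

variable {R M}

theorem dual_apply_mem_traceIdeal (φ : Dual R M) (m : M) : φ m ∈ traceIdeal R M :=
  Ideal.subset_span ⟨(φ, m), rfl⟩

theorem top_le_traceIdeal_smul_top [Projective R M] :
    (⊤ : Submodule R M) ≤ traceIdeal R M • ⊤ := by
  obtain ⟨s, hs⟩ := projective_def'.mp ‹Projective R M›
  intro m _
  have hm : (s m).sum (fun y c => c • y) = m := LinearMap.congr_fun hs m
  rw [← hm]
  exact Submodule.sum_mem _ fun y _ =>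
    Submodule.smul_mem_smul (dual_apply_mem_traceIdeal (Finsupp.lapply y ∘ₗ s) m)
      Submodule.mem_top

theorem traceIdeal_eq_top [Module.Finite R M] [Projective R M] [FaithfulSMul R M] :
    traceIdeal R M = ⊤ := by
  obtain ⟨r, hr, hr_smul⟩ := Submodule.exists_sub_one_mem_and_smul_eq_zero_of_fg_of_le_smul
    (traceIdeal R M) ⊤ Module.Finite.fg_top top_le_traceIdeal_smul_top
  have hr_zero : r = 0 :=
    eq_of_smul_eq_smul (M := R) (α := M) fun m => by rw [hr_smul m trivial, zero_smul]
  rw [hr_zero, zero_sub, neg_mem_iff] at hr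
  exact (Ideal.eq_top_iff_one _).mpr hr

theorem exists_sum_dual_apply_eq_one [Module.Finite R M] [Projective R M] [FaithfulSMul R M] :
    ∃ (n : ℕ) (φ : Fin n → Dual R M) (x : Fin n → M), ∑ i, φ i (x i) = 1 := by
  have hone : (1 : R) ∈ traceIdeal R M := by
    rw [traceIdeal_eq_top]; exact Submodule.mem_top
  obtain ⟨n, c, g, hsum⟩ := Submodule.mem_span_set'.mp hone
  choose p hp using fun i => (g i).2
  refine ⟨n, fun i => c i • (p i).1, fun i => (p i).2, ?_⟩
  simpa [hp] using hsum

end Module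

section Sandwich

variable {k A : Type*} [CommRing k] [Ring A] [Algebra k A]

theorem envModule_smul_eq_sandwich (e : A ⊗[k] Aᵐᵒᵖ) (x : A) : e • x = sandwich k A e x := by
  induction e using TensorProduct.induction_on with
  | zero => rw [map_zero, LinearMap.zero_apply]; exact zero_smul (A ⊗[k] Aᵐᵒᵖ) x
  | tmul a b => rfl
  | add u v hu hv => rw [add_smul, hu, hv, map_add]; rfl

theorem sandwich_mul (e e' : A ⊗[k] Aᵐᵒᵖ) :
    sandwich k A (e * e') = sandwich k A e ∘ₗ sandwich k A e' := by
  ext x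
  simp only [← envModule_smul_eq_sandwich, LinearMap.comp_apply, mul_smul]

noncomputable def envOfDual (hS : Function.Bijective (sandwich k A)) (φ : Module.Dual k A) :
    A →ₗ[A ⊗[k] Aᵐᵒᵖ] A ⊗[k] Aᵐᵒᵖ where
  toFun a := (LinearEquiv.ofBijective _ hS).symm (φ.smulRight a)
  map_add' a b := by
    rw [← map_add]
    congr 1
    ext
    simp
  map_smul' e a := (LinearEquiv.ofBijective _ hS).injective <| by
    ext y
    simp [smul_eq_mul, sandwich_mul, envModule_smul_eq_sandwich]

theorem sandwich_envOfDual (hS : Function.Bijective (sandwich k A)) (φ : Module.Dual k A)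
    (a : A) :
    sandwich k A (envOfDual hS φ a) = φ.smulRight a :=
  (LinearEquiv.ofBijective _ hS).apply_symm_apply _

theorem projective_env_of_sum_dual_apply_eq_one (hS : Function.Bijective (sandwich k A))
    {ι : Type*} [Fintype ι] (φ : ι → Module.Dual k A) (x : ι → A) (h : ∑ i, φ i (x i) = 1) :
    Module.Projective (A ⊗[k] Aᵐᵒᵖ) A := by
  refine .of_split (LinearMap.pi fun i => envOfDual hS (φ i))
    (Fintype.linearCombination _ x) (LinearMap.ext fun a => ?_)
  calc ∑ i, envOfDual hS (φ i) a • x i = ∑ i, φ i (x i) • a := by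
        simp [envModule_smul_eq_sandwich, sandwich_envOfDual]
    _ = a := by rw [← Finset.sum_smul, h, one_smul]

end Sandwich

/-- If the sandwich map is an isomorphism and `A` is finitely generated
projective and faithful as a `k`-module, then `A` is separable over `k`, i.e. projective
as a module over `A^e = A ⊗[k] Aᵐᵒᵖ`. -/
theorem azumaya_implies_separable (k A : Type*) [CommRing k] [Ring A] [Algebra k A]
    (hsand : Function.Bijective (sandwich k A))
    (hfin : Module.Finite k A) (hproj : Module.Projective k A)
    (hfaith : FaithfulSMul k A) :
    Module.Projective (A ⊗[k] Aᵐᵒᵖ) A := by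
  obtain ⟨n, φ, x, h⟩ := Module.exists_sum_dual_apply_eq_one (R := k) (M := A)
  exact projective_env_of_sum_dual_apply_eq_one hsand φ x h
end

section
/- Let k be a commutative ring and A a k-algebra that is Azumaya over k. Then the center of A equals the image of k, i.e., the unit map k → Z(A) is surjective and injective (A is central over k). -/
open TensorProduct MulOpposite

/-- `A` is an Azumaya `k`-algebra: finitely generated projective and faithful as a
`k`-module, and the sandwich map `A ⊗[k] Aᵐᵒᵖ → End_k(A)` is an isomorphism. -/
def IsAzumayaAlg (k A : Type*) [CommRing k] [Ring A] [Algebra k A] : Prop :=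
  Module.Finite k A ∧ Module.Projective k A ∧ FaithfulSMul k A ∧
    Function.Bijective (sandwich k A)

/-- If `A` is Azumaya over `k`, then the unit map `k → Z(A)` is bijective,
i.e. the center of `A` is exactly the image of `k`. -/
theorem azumaya_is_central (k A : Type*) [CommRing k] [Ring A] [Algebra k A]
    (h : IsAzumayaAlg k A) :
    Function.Bijective (algebraMap k (Subalgebra.center k A)) := by
  obtain ⟨hfin, hproj, hfaith, hbij⟩ := h
  haveI := hfin; haveI := hproj; haveI := hfaith
  constructor
  · -- injectivity
    intro r s hrs
    have h1 : algebraMap k A r = algebraMap k A s := congrArg Subtype.val hrs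
    refine FaithfulSMul.eq_of_smul_eq_smul (M := k) (α := A) fun a => ?_
    rw [Algebra.smul_def, Algebra.smul_def, h1]
  · -- surjectivity
    intro w
    set z : A := (w : A) with hz
    have hzc : ∀ a : A, a * z = z * a := Subalgebra.mem_center_iff.mp w.2
    set f : Module.End k A := LinearMap.mulLeft k z with hf
    -- f commutes with every k-linear endomorphism of A
    have hcomm : ∀ g : Module.End k A, f ∘ₗ g = g ∘ₗ f := by
      intro g
      obtain ⟨t, rfl⟩ := hbij.2 g
      induction t using TensorProduct.induction_on with
      | zero => simp
      | tmul a b =>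
        ext y
        simp only [LinearMap.comp_apply, sandwich, TensorProduct.lift.tmul,
          LinearMap.mk₂_apply, LinearMap.mulLeft_apply, LinearMap.mulRight_apply, hf]
        simp only [← mul_assoc]
        rw [hzc a]
      | add s t hs ht =>
        rw [map_add, LinearMap.comp_add, LinearMap.add_comp, hs, ht]
    -- the key relation
    have hstar : ∀ (φ : Module.Dual k A) (x m : A), φ x • f m = φ (f x) • m := by
      intro φ x m
      have h2 := LinearMap.ext_iff.mp (hcomm (φ.smulRight m)) x
      simpa using h2
    -- a finite dual basis
    obtain ⟨n, F, G, hFs, hGi, hFG⟩ := Module.Finite.exists_comp_eq_id_of_projective k A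
    set x : Fin n → A := fun i => F (Pi.single i 1) with hx
    set φ : Fin n → Module.Dual k A := fun i => (LinearMap.proj i) ∘ₗ G with hφ
    have hdb : ∀ m : A, ∑ i, φ i m • x i = m := by
      intro m
      have h3 : F (G m) = m := LinearMap.ext_iff.mp hFG m
      conv_rhs => rw [← h3, ← Finset.univ_sum_single (G m)]
      rw [map_sum]
      refine Finset.sum_congr rfl fun i _ => ?_
      show G m i • F (Pi.single i 1) = F (Pi.single i (G m i))
      rw [← map_smul]
      congr 1
      ext j
      simp [Pi.single_apply, mul_ite]
    -- the trace ideal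
    set T : Ideal k := Ideal.span (Set.range fun p : Fin n × Fin n => φ p.1 (x p.2)) with hT
    have hkey : ∀ (i : Fin n) (m : A), φ i m = ∑ j, φ j m * φ i (x j) := by
      intro i m
      conv_lhs => rw [← hdb m]
      rw [map_sum]
      simp [smul_eq_mul]
    have hgen : ∀ (i : Fin n) (m : A), φ i m ∈ T := by
      intro i m
      rw [hkey i m]
      exact Ideal.sum_mem _ fun j _ =>
        Ideal.mul_mem_left _ _ (Ideal.subset_span ⟨(i, j), rfl⟩)
    have hidem : IsIdempotentElem T := by
      refine le_antisymm Ideal.mul_le_left ?_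
      rw [hT, Ideal.span_le]
      rintro t ⟨⟨i, j⟩, rfl⟩
      simp only [SetLike.mem_coe]
      show φ i (x j) ∈ _
      rw [hkey i (x j)]
      exact Ideal.sum_mem _ fun l _ =>
        Ideal.mul_mem_mul (Ideal.subset_span ⟨(l, j), rfl⟩)
          (Ideal.subset_span ⟨(i, l), rfl⟩)
    have hTfg : T.FG := Submodule.fg_span (Set.finite_range _)
    obtain ⟨e, he, hTe⟩ := (Ideal.isIdempotentElem_iff_of_fg T hTfg).mp hidem
    have he1 : e = 1 := by
      have h0 : ∀ m : A, (1 - e) • m = (0 : k) • m := by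
        intro m
        rw [zero_smul]
        conv_lhs => rw [← hdb m]
        rw [Finset.smul_sum]
        refine Finset.sum_eq_zero fun i _ => ?_
        obtain ⟨c, hc⟩ := Ideal.mem_span_singleton'.mp (hTe ▸ hgen i m)
        have h4 : (1 - e) * (c * e) = 0 := by
          have he' : e * e = e := he
          linear_combination (-c) * he'
        rw [smul_smul, ← hc, h4, zero_smul]
      have h5 : (1 : k) - e = 0 := FaithfulSMul.eq_of_smul_eq_smul h0
      exact (sub_eq_zero.mp h5).symm
    have hone : (1 : k) ∈ T := by
      rw [hTe, he1]
      exact Submodule.mem_span_singleton_self 1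
    -- extract the scalar
    have hQ : ∀ t ∈ T, ∃ c : k, ∀ m : A, t • f m = c • m := by
      intro t ht
      refine Submodule.span_induction ?_ ?_ ?_ ?_ ht
      · rintro t ⟨⟨i, j⟩, rfl⟩
        exact ⟨φ i (f (x j)), fun m => hstar (φ i) (x j) m⟩
      · exact ⟨0, fun m => by simp⟩
      · rintro t t' _ _ ⟨c, hc⟩ ⟨c', hc'⟩
        exact ⟨c + c', fun m => by rw [add_smul, hc, hc', add_smul]⟩
      · rintro r t _ ⟨c, hc⟩
        exact ⟨r * c, fun m => by rw [smul_eq_mul, mul_smul, hc, mul_smul]⟩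
    obtain ⟨c, hc⟩ := hQ 1 hone
    refine ⟨c, Subtype.ext ?_⟩
    have h6 : z = c • (1 : A) := by
      have := hc 1
      simpa [hf, LinearMap.mulLeft_apply] using this
    have h7 : (algebraMap k (Subalgebra.center k A) c : A) = algebraMap k A c := rfl
    rw [h7, Algebra.algebraMap_eq_smul_one, ← h6]
end

section
/- Let k be a commutative ring and M a finitely generated projective faithful k-module. Then End_k(M) is an Azumaya k-algebra. -/
open TensorProduct MulOpposite

section Aux

variable {k M : Type*} [CommRing k] [AddCommGroup M] [Module k M]

lemma sandwich_tmul_apply {A : Type*} [Ring A] [Algebra k A] (a : A) (b : Aᵐᵒᵖ) (y : A) :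
    sandwich k A (a ⊗ₜ[k] b) y = a * y * b.unop := by
  simp [sandwich, mul_assoc]

variable {n : ℕ} (x : Fin n → M) (f : Fin n → (M →ₗ[k] k))

/-- abbreviation for the "matrix unit" endomorphisms -/
noncomputable def eu (i j : Fin n) : Module.End k M := (f j).smulRight (x i)

lemma eu_apply (i j : Fin n) (m : M) : eu x f i j m = f j m • x i := rfl

/-- the key dual-basis expansion identity for endomorphisms -/
lemma key_expand (hx : ∀ m, ∑ i, f i m • x i = m) (g : Module.End k M) :
    ∑ i, ∑ j, f i (g (x j)) • eu x f i j = g := by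
  ext m
  simp only [LinearMap.coe_sum, Finset.sum_apply, LinearMap.smul_apply, eu_apply]
  rw [Finset.sum_comm]
  calc ∑ j, ∑ i, f i (g (x j)) • f j m • x i
      = ∑ j, f j m • ∑ i, f i (g (x j)) • x i := by
        refine Finset.sum_congr rfl fun j _ => ?_
        rw [Finset.smul_sum]
        exact Finset.sum_congr rfl fun i _ => smul_comm _ _ _
    _ = ∑ j, f j m • g (x j) := by
        exact Finset.sum_congr rfl fun j _ => by rw [hx]
    _ = g (∑ j, f j m • x j) := by rw [map_sum]; simp
    _ = g m := by rw [hx]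

lemma eu_conj (g : Module.End k M) (p i j q : Fin n) :
    eu x f p i * g * eu x f j q = f i (g (x j)) • eu x f p q := by
  ext m
  simp only [Module.End.mul_apply, eu_apply, LinearMap.smul_apply, map_smul]
  rw [smul_comm]

lemma sum4_swap {ι β : Type*} [Fintype ι] [AddCommMonoid β]
    (t : ι → ι → ι → ι → β) :
    ∑ p, ∑ i, ∑ j, ∑ q, t p i j q = ∑ j, ∑ q, ∑ p, ∑ i, t p i j q :=
  calc ∑ p, ∑ i, ∑ j, ∑ q, t p i j q
      = ∑ p, ∑ j, ∑ i, ∑ q, t p i j q :=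
        Finset.sum_congr rfl fun p _ => Finset.sum_comm
    _ = ∑ j, ∑ p, ∑ i, ∑ q, t p i j q := Finset.sum_comm
    _ = ∑ j, ∑ p, ∑ q, ∑ i, t p i j q :=
        Finset.sum_congr rfl fun j _ => Finset.sum_congr rfl fun p _ => Finset.sum_comm
    _ = ∑ j, ∑ q, ∑ p, ∑ i, t p i j q :=
        Finset.sum_congr rfl fun j _ => Finset.sum_comm

/-- explicit inverse of the sandwich map for `End k M` -/
noncomputable def psi : Module.End k (Module.End k M) →
    (Module.End k M) ⊗[k] (Module.End k M)ᵐᵒᵖ := fun F =>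
  ∑ p, ∑ i, ∑ j, ∑ q,
    f p (F (eu x f i j) (x q)) • (eu x f p i ⊗ₜ[k] op (eu x f j q))

lemma psi_add (F G : Module.End k (Module.End k M)) :
    psi x f (F + G) = psi x f F + psi x f G := by
  simp [psi, add_smul, Finset.sum_add_distrib]

lemma psi_sandwich (hx : ∀ m, ∑ i, f i m • x i = m) (t : (Module.End k M) ⊗[k] (Module.End k M)ᵐᵒᵖ) :
    psi x f (sandwich k (Module.End k M) t) = t := by
  induction t with
  | zero => simp [psi]
  | add t₁ t₂ h₁ h₂ => rw [map_add, psi_add, h₁, h₂]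
  | tmul a b =>
    rw [← op_unop b]
    set c := b.unop with hc
    unfold psi
    have hterm : ∀ p i j q : Fin n,
        f p ((sandwich k (Module.End k M) (a ⊗ₜ[k] op c)) (eu x f i j) (x q))
          = f p (a (x i)) * f j (c (x q)) := by
      intro p i j q
      rw [sandwich_tmul_apply]
      simp [Module.End.mul_apply, eu_apply, mul_comm]
    conv_rhs => rw [← key_expand x f hx a, ← key_expand x f hx c]
    simp only [Finset.op_sum, op_smul, sum_tmul, tmul_sum, smul_tmul', tmul_smul,
      Finset.smul_sum, smul_smul]
    refine Eq.trans (b := ∑ p, ∑ i, ∑ j, ∑ q,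
        (((f p) (a (x i)) * (f j) (c (x q))) • eu x f p i) ⊗ₜ[k] op (eu x f j q)) ?_ ?_
    · exact Finset.sum_congr rfl fun p _ => Finset.sum_congr rfl fun i _ =>
        Finset.sum_congr rfl fun j _ => Finset.sum_congr rfl fun q _ => by rw [hterm]
    · rw [sum4_swap]
      exact Finset.sum_congr rfl fun p _ => Finset.sum_congr rfl fun i _ =>
        Finset.sum_congr rfl fun j _ => Finset.sum_congr rfl fun q _ => by rw [mul_comm]

lemma sandwich_psi (hx : ∀ m, ∑ i, f i m • x i = m) (F : Module.End k (Module.End k M)) :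
    sandwich k (Module.End k M) (psi x f F) = F := by
  refine LinearMap.ext fun g => ?_
  unfold psi
  simp only [map_sum, map_smul, LinearMap.sum_apply, LinearMap.smul_apply]
  have hterm : ∀ p i j q : Fin n,
      (sandwich k (Module.End k M) (eu x f p i ⊗ₜ[k] op (eu x f j q))) g
        = f i (g (x j)) • eu x f p q := by
    intro p i j q
    rw [sandwich_tmul_apply, unop_op, eu_conj]
  calc ∑ p, ∑ i, ∑ j, ∑ q, f p (F (eu x f i j) (x q)) •
          (sandwich k (Module.End k M) (eu x f p i ⊗ₜ[k] op (eu x f j q))) g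
      = ∑ p, ∑ q, ∑ i, ∑ j, (f i (g (x j)) * f p (F (eu x f i j) (x q))) • eu x f p q := by
        refine Finset.sum_congr rfl fun p _ => ?_
        rw [show (∑ i, ∑ j, ∑ q, f p (F (eu x f i j) (x q)) •
            (sandwich k (Module.End k M) (eu x f p i ⊗ₜ[k] op (eu x f j q))) g)
          = ∑ i, ∑ q, ∑ j, f p (F (eu x f i j) (x q)) •
            (sandwich k (Module.End k M) (eu x f p i ⊗ₜ[k] op (eu x f j q))) g from
          Finset.sum_congr rfl fun i _ => Finset.sum_comm]
        rw [Finset.sum_comm]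
        refine Finset.sum_congr rfl fun q _ => Finset.sum_congr rfl fun i _ =>
          Finset.sum_congr rfl fun j _ => ?_
        rw [hterm, smul_smul, mul_comm]
    _ = ∑ p, ∑ q, f p (F g (x q)) • eu x f p q := by
        refine Finset.sum_congr rfl fun p _ => Finset.sum_congr rfl fun q _ => ?_
        have : ∑ i, ∑ j, (f i (g (x j)) * f p (F (eu x f i j) (x q))) • eu x f p q
            = f p ((∑ i, ∑ j, f i (g (x j)) • F (eu x f i j)) (x q)) • eu x f p q := by
          simp only [LinearMap.coe_sum, Finset.sum_apply, LinearMap.smul_apply, map_sum,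
            map_smul, Finset.sum_smul, smul_eq_mul]
        have h3 : (∑ i, ∑ j, f i (g (x j)) • F (eu x f i j)) = F g := by
          conv_rhs => rw [← key_expand x f hx g]
          rw [map_sum]
          exact Finset.sum_congr rfl fun i _ => by
            rw [map_sum]
            exact Finset.sum_congr rfl fun j _ => (map_smul F _ _).symm ▸ rfl
        rw [this, h3]
    _ = F g := by rw [key_expand x f hx]

/-- conjugation map between endomorphism modules -/
def conjL {B : Type*} [AddCommGroup B] [Module k B] (π : B →ₗ[k] M) (s : M →ₗ[k] B) :
    Module.End k B →ₗ[k] Module.End k M where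
  toFun g := π ∘ₗ g ∘ₗ s
  map_add' g h := by ext m; simp
  map_smul' c g := by ext m; simp

end Aux

/-- The endomorphism algebra of a finitely generated projective faithful
`k`-module is an Azumaya `k`-algebra. -/
theorem end_is_azumaya (k M : Type*) [CommRing k] [AddCommGroup M] [Module k M]
    (hfin : Module.Finite k M) (hproj : Module.Projective k M)
    (hfaith : FaithfulSMul k M) :
    IsAzumayaAlg k (Module.End k M) := by
  obtain ⟨n, π, hπ⟩ := Module.Finite.exists_fin' k M
  obtain ⟨s, hs⟩ := Module.projective_lifting_property π LinearMap.id hπ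
  have hs' : ∀ m, π (s m) = m := fun m => LinearMap.congr_fun hs m
  -- dual system
  set x : Fin n → M := fun i => π ((Pi.single i 1 : Fin n → k)) with hxdef
  set f : Fin n → (M →ₗ[k] k) := fun i => (LinearMap.proj i) ∘ₗ s with hfdef
  have hx : ∀ m, ∑ i, f i m • x i = m := by
    intro m
    have : ∑ i, f i m • x i = π (∑ i, s m i • (Pi.single i 1 : Fin n → k)) := by
      rw [map_sum]
      exact Finset.sum_congr rfl fun i _ => by simp [hxdef, hfdef]
    rw [this]
    have h2 : (∑ i, s m i • (Pi.single i 1 : Fin n → k)) = s m := by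
      ext j
      simp [Pi.single_apply, Finset.sum_apply]
    rw [h2]
    exact hs' m
  refine ⟨?_, ?_, ?_, ?_⟩
  · -- finite
    have hsur : Function.Surjective (conjL π s) := by
      intro g
      exact ⟨s ∘ₗ g ∘ₗ π, by
        show π ∘ₗ (s ∘ₗ g ∘ₗ π) ∘ₗ s = g
        ext m
        simp [hs']⟩
    exact Module.Finite.of_surjective (conjL π s) hsur
  · -- projective
    refine Module.Projective.of_split (conjL s π) (conjL π s) ?_
    ext g m
    show (π ∘ₗ (s ∘ₗ g ∘ₗ π) ∘ₗ s) m = g m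
    simp [hs']
  · -- faithful
    refine ⟨fun {c c'} h => ?_⟩
    refine hfaith.eq_of_smul_eq_smul fun m => ?_
    have := congrFun (congrArg (fun (g : Module.End k M) => (g : M → M)) (h LinearMap.id)) m
    simpa using this
  · exact Function.bijective_iff_has_inverse.mpr
      ⟨psi x f, fun t => psi_sandwich x f hx t, fun F => sandwich_psi x f hx F⟩
end

section
/- In a closed symmetric monoidal category, let X be a dualizable object such that the unit map 1 → [X, X] (adjoint to the left unitor) is an isomorphism. Then the evaluation map X ⊗ [X, 1] → 1 is an isomorphism. -/
/-!
Because `Y` is a dual of `X`, the internal hom `[X, -]` is isomorphic to `Y ⊗ -`, so the unit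
isomorphism `1 ≅ [X, X]` yields `Y ⊗ X ≅ 1`, and by the braiding also `X ⊗ Y ≅ 1`. Hence `X ⊗ -`
is an autoequivalence, and the counit of `X ⊗ - ⊣ [X, -]`, whose component at `1` is the
evaluation, is an isomorphism.
-/

open CategoryTheory CategoryTheory.MonoidalCategory CategoryTheory.MonoidalClosed

/-- The unit map `1 ⟶ [X, X]`, adjoint to the unitor `X ⊗ 1 ≅ X`. -/
noncomputable def unitIhom {C : Type*} [Category C] [MonoidalCategory C]
    [SymmetricCategory C] [MonoidalClosed C] (X : C) :
    𝟙_ C ⟶ (ihom X).obj X :=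
  MonoidalClosed.curry (ρ_ X).hom

namespace CategoryTheory.MonoidalCategory

variable {C : Type*} [Category C] [MonoidalCategory C]

def tensorLeftEquivOfIsoUnit {X Y : C} (e : Y ⊗ X ≅ 𝟙_ C) (e' : X ⊗ Y ≅ 𝟙_ C) : C ≌ C :=
  Equivalence.mk (tensorLeft X) (tensorLeft Y)
    ((leftUnitorNatIso C).symm ≪≫ (tensoringLeft C).mapIso e.symm ≪≫ tensorLeftTensor Y X)
    ((tensorLeftTensor X Y).symm ≪≫ (tensoringLeft C).mapIso e' ≪≫ leftUnitorNatIso C)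

lemma isEquivalence_tensorLeft_of_iso_unit [BraidedCategory C] {X Y : C} (e : Y ⊗ X ≅ 𝟙_ C) :
    (tensorLeft X).IsEquivalence :=
  (tensorLeftEquivOfIsoUnit e (β_ X Y ≪≫ e)).isEquivalence_functor

end CategoryTheory.MonoidalCategory

namespace CategoryTheory.MonoidalClosed

variable {C : Type*} [Category C] [MonoidalCategory C] [MonoidalClosed C]

noncomputable def ihomIsoTensorLeft (X Y : C) [ExactPairing Y X] : ihom X ≅ tensorLeft Y :=
  (ihom.adjunction X).rightAdjointUniq (tensorLeftAdjunction Y X)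

lemma isIso_ev_app_of_isEquivalence (X A : C) [(tensorLeft X).IsEquivalence] :
    IsIso ((ihom.ev X).app A) :=
  inferInstanceAs (IsIso ((ihom.adjunction X).counit.app A))

end CategoryTheory.MonoidalClosed

/-- In a closed symmetric monoidal category, if `X` is dualizable and the
unit map `1 ⟶ [X, X]` is an isomorphism, then the evaluation `X ⊗ [X, 1] ⟶ 1` is an
isomorphism. -/
theorem dualizable_unit_iso_implies_ev_iso {C : Type*} [Category C] [MonoidalCategory C]
    [SymmetricCategory C] [MonoidalClosed C] (X Y : C) [ExactPairing X Y]
    (hunit : IsIso (unitIhom X)) :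
    IsIso ((ihom.ev X).app (𝟙_ C)) := by
  have := BraidedCategory.exactPairing_swap X Y
  have := isEquivalence_tensorLeft_of_iso_unit
    ((asIso (unitIhom X) ≪≫ (ihomIsoTensorLeft X Y).app X).symm)
  exact isIso_ev_app_of_isEquivalence X (𝟙_ C)
end

section
/- Let T be a triangulated category with arbitrary (small) coproducts. Then every triangulated subcategory of T closed under coproducts is thick, i.e., closed under direct summands. -/
open CategoryTheory CategoryTheory.Limits CategoryTheory.Pretriangulated

universe v u

namespace CategoryTheory.Triangulated

/-- The Mathlib (Dec 2024) notion `Triangulated.Subcategory`, removed since; restored verbatim. -/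
structure Subcategory (C : Type*) [Category C] [HasZeroObject C] [HasShift C ℤ] [Preadditive C]
    [∀ n : ℤ, (shiftFunctor C n).Additive] [Pretriangulated C] where
  P : C → Prop
  zero' : ∃ (Z : C) (_ : IsZero Z), P Z
  shift (X : C) (n : ℤ) : P X → P (X⟦n⟧)
  ext₂' (T : Triangle C) (_ : T ∈ distTriang C) : P T.obj₁ → P T.obj₃ → ObjectProperty.isoClosure P T.obj₂

end CategoryTheory.Triangulated

/-! Let `e = r ≫ i` be the idempotent of `X` cutting out `Y`, and think of `X` as `Y ⊕ Y'`.
For `B = ∐ₙ X`, the Eilenberg swindle `B = Y ⊕ Y' ⊕ Y ⊕ Y' ⊕ ⋯ ≅ (Y' ⊕ Y ⊕ Y' ⊕ ⋯) ⊕ Y`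
can be written down without splitting `e`: the inclusion of `B` moves the `Y`-part of each
copy of `X` one copy up, and `Y` goes into the `Y`-part of copy `0`. If `X` lies in a
triangulated subcategory closed under coproducts, so does `B`, hence so does `B ⊞ Y ≅ B`, and
`Y` is the middle vertex of the rotated split triangle `B ⊞ Y → Y → B⟦1⟧ → (B ⊞ Y)⟦1⟧`. -/

namespace CategoryTheory.Retract

variable {C : Type*} [Category C] [Preadditive C] {Y X : C} (h : Retract Y X)
  [HasCoproduct fun _ : ℕ => X]

noncomputable def swindleShift : (∐ fun _ : ℕ => X) ⟶ ∐ fun _ : ℕ => X :=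
  Limits.Sigma.desc fun n =>
    (𝟙 X - h.r ≫ h.i) ≫ Limits.Sigma.ι (fun _ : ℕ => X) n +
      h.r ≫ h.i ≫ Limits.Sigma.ι (fun _ : ℕ => X) (n + 1)

noncomputable def swindleUnshift : (∐ fun _ : ℕ => X) ⟶ ∐ fun _ : ℕ => X :=
  Limits.Sigma.desc fun
    | 0 => (𝟙 X - h.r ≫ h.i) ≫ Limits.Sigma.ι (fun _ : ℕ => X) 0
    | n + 1 =>
      h.r ≫ h.i ≫ Limits.Sigma.ι (fun _ : ℕ => X) n +
        (𝟙 X - h.r ≫ h.i) ≫ Limits.Sigma.ι (fun _ : ℕ => X) (n + 1)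

noncomputable def swindleHead : (∐ fun _ : ℕ => X) ⟶ Y :=
  Limits.Sigma.desc fun
    | 0 => h.r
    | _ + 1 => 0

noncomputable def swindleBicone : BinaryBicone (∐ fun _ : ℕ => X) Y where
  pt := ∐ fun _ : ℕ => X
  fst := h.swindleUnshift
  snd := h.swindleHead
  inl := h.swindleShift
  inr := h.i ≫ Limits.Sigma.ι (fun _ : ℕ => X) 0
  inl_fst := by
    ext (_ | n) <;>
      simp [swindleShift, swindleUnshift, Preadditive.sub_comp, Preadditive.comp_sub]
  inl_snd := by
    ext (_ | n) <;>
      simp [swindleShift, swindleHead, Preadditive.sub_comp]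
  inr_fst := by simp [swindleUnshift, Preadditive.comp_sub]
  inr_snd := by simp [swindleHead]

noncomputable def isBilimitSwindleBicone : h.swindleBicone.IsBilimit :=
  isBinaryBilimitOfTotal _ <| by
    change h.swindleUnshift ≫ h.swindleShift +
      h.swindleHead ≫ h.i ≫ Limits.Sigma.ι (fun _ : ℕ => X) 0 = 𝟙 _
    ext (_ | n) <;>
      simp [swindleShift, swindleUnshift, swindleHead, Preadditive.sub_comp, Preadditive.comp_sub]

end CategoryTheory.Retract

namespace CategoryTheory.Triangulated.Subcategory

variable {C : Type*} [Category C] [HasZeroObject C] [HasShift C ℤ] [Preadditive C]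
  [∀ n : ℤ, (shiftFunctor C n).Additive] [Pretriangulated C]
  (S : Subcategory C) [ObjectProperty.IsClosedUnderIsomorphisms S.P]

lemma prop_of_isBilimit {X Y : C} {b : BinaryBicone X Y} (hb : b.IsBilimit) (hpt : S.P b.pt)
    (hX : S.P X) : S.P Y := by
  have hXY : S.P (X ⊞ Y) := ObjectProperty.prop_of_iso S.P (biprod.uniqueUpToIso X Y hb) hpt
  obtain ⟨Z, hZ, ⟨e⟩⟩ := S.ext₂' _
    (rot_of_distTriang _ (binaryBiproductTriangle_distinguished X Y)) hXY (S.shift X 1 hX)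
  exact ObjectProperty.prop_of_iso S.P e.symm hZ

end CategoryTheory.Triangulated.Subcategory

/-- In a triangulated category with all small coproducts, every (strictly
full) triangulated subcategory closed under coproducts is thick, i.e. closed under
direct summands (retracts). -/
theorem localizing_subcategory_is_thick
    (T : Type u) [Category.{v} T] [HasZeroObject T] [HasShift T ℤ] [Preadditive T]
    [∀ n : ℤ, (shiftFunctor T n).Additive] [Pretriangulated T] [IsTriangulated T]
    [HasCoproducts.{v} T]
    (S : Triangulated.Subcategory T) [ObjectProperty.IsClosedUnderIsomorphisms S.P]
    (hcoprod : ∀ {J : Type v} (f : J → T), (∀ j, S.P (f j)) → S.P (∐ f)) :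
    ∀ (X Y : T) (i : Y ⟶ X) (p : X ⟶ Y), i ≫ p = 𝟙 Y → S.P X → S.P Y := by
  intro X Y i p hip hX
  have := hasCoproductsOfShape_of_small.{v} T ℕ
  have hB : S.P (∐ fun _ : ℕ => X) :=
    ObjectProperty.prop_of_iso S.P (Sigma.reindex Equiv.ulift fun _ => X) (hcoprod _ fun _ => hX)
  exact S.prop_of_isBilimit (Retract.isBilimitSwindleBicone ⟨i, p, hip⟩) hB hB
end

section
/- Let k be a field. Then every Azumaya k-algebra A is a central simple k-algebra, i.e., A is finite-dimensional over k, has center exactly k, and has no nontrivial two-sided ideals. -/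
open TensorProduct MulOpposite

/-- Over a field `k`, every Azumaya `k`-algebra is central simple:
finite-dimensional, with center exactly `k`, and with no nontrivial two-sided ideals. -/
theorem azumaya_is_central_simple (k A : Type*) [Field k] [Ring A] [Algebra k A]
    (h : IsAzumayaAlg k A) :
    FiniteDimensional k A ∧
      Function.Bijective (algebraMap k (Subalgebra.center k A)) ∧
      (∀ I : TwoSidedIdeal A, I = ⊥ ∨ I = ⊤) := by
  obtain ⟨hfin, hproj, hfaith, hbij⟩ := h
  haveI : Module.Finite k A := hfin
  haveI : FaithfulSMul k A := hfaith
  haveI : Nontrivial A := by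
    by_contra hA
    rw [not_nontrivial_iff_subsingleton] at hA
    have : (0 : k) = 1 := FaithfulSMul.eq_of_smul_eq_smul (α := A)
      (fun a => Subsingleton.elim _ _)
    exact zero_ne_one this
  -- every endomorphism is a sandwich combination applied:
  have key : ∀ (f : Module.End k A) (x : A) (I : TwoSidedIdeal A), x ∈ I → f x ∈ I := by
    intro f x I hx
    obtain ⟨t, rfl⟩ := hbij.2 f
    induction t using TensorProduct.induction_on with
    | zero => simpa using I.zero_mem
    | tmul a b =>
        have := I.mul_mem_right _ b.unop (I.mul_mem_left a _ hx)
        simpa [sandwich, mul_assoc] using this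
    | add s t hs ht =>
        simpa using I.add_mem hs ht
  refine ⟨hfin, ?_, ?_⟩
  · -- center
    constructor
    · intro a b hab
      have : algebraMap k A a = algebraMap k A b := congrArg Subtype.val hab
      exact (algebraMap k A).injective this
    · rintro ⟨z, hz⟩
      -- mulLeft z commutes with all endomorphisms
      have hcomm : ∀ f : Module.End k A, LinearMap.mulLeft k z * f = f * LinearMap.mulLeft k z := by
        intro f
        obtain ⟨t, rfl⟩ := hbij.2 f
        induction t using TensorProduct.induction_on with
        | zero => simp
        | tmul a b =>
            ext x
            have h1 : z * a = a * z := (Subalgebra.mem_center_iff.mp hz a).symm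
            simp only [sandwich, TensorProduct.lift.tmul, LinearMap.mk₂_apply,
              Module.End.mul_apply, LinearMap.coe_comp, Function.comp_apply,
              LinearMap.mulLeft_apply, LinearMap.mulRight_apply]
            rw [← mul_assoc, ← mul_assoc, ← mul_assoc, h1, mul_assoc a z x]
        | add s t hs ht =>
            simp only [map_add]
            rw [mul_add, add_mul, hs, ht]
      have hc : LinearMap.mulLeft k z ∈ Subalgebra.center k (Module.End k A) :=
        Subalgebra.mem_center_iff.mpr fun f => (hcomm f).symm
      -- center of End is k via matrix algebra
      let e : Module.End k A ≃ₐ[k] Matrix (Fin (Module.finrank k A)) (Fin (Module.finrank k A)) k :=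
        algEquivMatrix (Module.finBasis k A)
      have hc' : e (LinearMap.mulLeft k z) ∈ Subalgebra.center k _ :=
        Subalgebra.mem_center_iff.mpr fun m => by
          have := Subalgebra.mem_center_iff.mp hc (e.symm m)
          calc m * e (LinearMap.mulLeft k z)
              = e (e.symm m * LinearMap.mulLeft k z) := by simp [map_mul]
            _ = e (LinearMap.mulLeft k z * e.symm m) := by rw [this]
            _ = e (LinearMap.mulLeft k z) * m := by simp [map_mul]
      obtain ⟨c, hcval⟩ := Algebra.IsCentral.mem_center_iff k |>.mp hc'
      have : LinearMap.mulLeft k z = algebraMap k (Module.End k A) c := by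
        apply e.injective
        rw [hcval, AlgEquiv.commutes]
      have hz1 : z = algebraMap k A c := by
        have := congrArg (fun f : Module.End k A => f 1) this
        simpa [Algebra.algebraMap_eq_smul_one, Module.algebraMap_end_apply] using this
      refine ⟨c, ?_⟩
      ext
      simpa [Algebra.algebraMap_eq_smul_one] using hz1.symm
  · -- simplicity
    intro I
    by_cases hI : I = ⊥
    · exact Or.inl hI
    · right
      obtain ⟨x, hxI, hx0⟩ : ∃ x, x ∈ I ∧ x ≠ 0 := by
        by_contra hc
        push_neg at hc
        exact hI (eq_bot_iff.mpr fun y hy => by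
          simpa [TwoSidedIdeal.mem_bot] using hc y hy)
      rw [eq_top_iff]
      intro y _
      -- find φ with φ x ≠ 0
      obtain ⟨φ, hφ⟩ : ∃ φ : A →ₗ[k] k, φ x ≠ 0 := by
        by_contra hc
        push_neg at hc
        exact hx0 ((Module.forall_dual_apply_eq_zero_iff k x).mp hc)
      set f : Module.End k A := ((φ x)⁻¹ • φ).smulRight y with hf
      have hfx : f x = y := by
        simp [hf, LinearMap.smulRight_apply, smul_smul, inv_mul_cancel₀ hφ]
      have := key f x I hxI
      rwa [hfx] at this
end
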